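/- arXiv:2301.10104 — 2 statements merged into one kernel-verified Lean document; each statement's English description precedes it below -/
import Mathlib

section
/- Let 0 < α < 1 and let h ∈ L²(𝕋) be a nonnegative function with ∫_{-π}^{π} log h(t) dt > -∞ and N_α(h) < +∞. Then for every δ > 0 the set 𝕋_{h,δ} := { e^{iθ} ∈ 𝕋_h : limsup_{r→1⁻} (1/2π) ∫_{𝕋_h^+(θ)} ((1-r²)/|e^{iφ}-re^{iθ}|²) log(h(φ)/h(θ)) dφ ≥ δ } has zero Lebesgue measure. -/
open MeasureTheory Real Set Filter
open scoped ENNReal NNReal Topology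

noncomputable section

/-- The point `e^{it}` on the unit circle. -/
def circ (t : ℝ) : ℂ := Complex.exp (t * Complex.I)

/-- Squared `L²(𝕋)` norm of `h`, identified with a function on `(-π, π]`. -/
def normSq2 (h : ℝ → ℝ) : ℝ≥0∞ := ∫⁻ t in Ioc (-π) π, ENNReal.ofReal ((h t) ^ 2)

/-- `N_α(h) = ∫∫ |h(φ)-h(θ)|²/|e^{iφ}-e^{iθ}|^{2-α} dφ dθ`. -/
def Nint (α : ℝ) (h : ℝ → ℝ) : ℝ≥0∞ :=
  ∫⁻ θ in Ioc (-π) π, ∫⁻ φ in Ioc (-π) π,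
    ENNReal.ofReal (|h φ - h θ| ^ 2 / ‖circ φ - circ θ‖ ^ (2 - α))

/-- The weighted Dirichlet integral `𝒟_α(f) = (1/π) ∫_𝔻 |f'(z)|² (1-|z|)^α dA(z)`. -/
def Dint (α : ℝ) (f : ℂ → ℂ) : ℝ≥0∞ :=
  (ENNReal.ofReal π)⁻¹ *
    ∫⁻ z in Metric.ball (0 : ℂ) 1, ENNReal.ofReal (‖deriv f z‖ ^ 2 * (1 - ‖z‖) ^ α)

/-- The outer function `O_h`. -/
def outer (h : ℝ → ℝ) (z : ℂ) : ℂ :=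
  Complex.exp (((2 * π : ℝ) : ℂ)⁻¹ *
    ∫ φ in Ioc (-π) π, ((circ φ + z) / (circ φ - z)) * (Real.log (h φ) : ℂ))

/-- `‖O_h‖²_{𝒟_α} = |O_h(0)|² + 𝒟_α(O_h)`. -/
def DNorm (α : ℝ) (h : ℝ → ℝ) : ℝ≥0∞ :=
  ENNReal.ofReal (‖outer h 0‖ ^ 2) + Dint α (outer h)

/-- Inner integral of `n_α`: `∫_{h(φ) ≤ h(θ)/2, |e^{iφ}-e^{iθ}| ≥ δ} log(h(θ)/h(φ))/|e^{iφ}-e^{iθ}|² dφ`. -/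
def aInt (h : ℝ → ℝ) (δ θ : ℝ) : ℝ≥0∞ :=
  ∫⁻ φ in Ioc (-π) π,
    {φ : ℝ | h φ ≤ h θ / 2 ∧ δ ≤ ‖circ φ - circ θ‖}.indicator
      (fun φ => ENNReal.ofReal (Real.log (h θ / h φ) / ‖circ φ - circ θ‖ ^ 2)) φ

/-- Inner integral of `ñ_α`. -/
def tInt (α : ℝ) (h : ℝ → ℝ) (δ θ : ℝ) : ℝ≥0∞ :=
  ∫⁻ φ in Ioc (-π) π,
    {φ : ℝ | h φ ≤ h θ / 2 ∧ ‖circ φ - circ θ‖ ≤ δ}.indicator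
      (fun φ => ENNReal.ofReal (Real.log (h θ / h φ) / ‖circ φ - circ θ‖ ^ (2 - α))) φ

/-- `n_α(h,λ)`. -/
def nSmall (α : ℝ) (h lam : ℝ → ℝ) : ℝ≥0∞ :=
  ∫⁻ θ in Ioc (-π) π, ENNReal.ofReal ((h θ) ^ 2) * aInt h (lam θ) θ ^ (1 - α)

/-- `ñ_α(h,λ)`. -/
def nTilde (α : ℝ) (h lam : ℝ → ℝ) : ℝ≥0∞ :=
  ∫⁻ θ in Ioc (-π) π, ENNReal.ofReal ((h θ) ^ 2) * tInt α h (lam θ) θ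

/-- Membership in `Λ`: measurable and strictly positive a.e. on the circle. -/
def MemLambda (lam : ℝ → ℝ) : Prop :=
  Measurable lam ∧ ∀ᵐ θ ∂(volume.restrict (Ioc (-π) π)), 0 < lam θ

/-- `a_{h,δ}(θ)`. -/
def aH (h : ℝ → ℝ) (δ θ : ℝ) : ℝ≥0∞ := (ENNReal.ofReal (2 * π))⁻¹ * aInt h δ θ

/-- `ã_{h,δ}(θ)`. -/
def aTildeH (h : ℝ → ℝ) (δ θ : ℝ) : ℝ≥0∞ :=
  (ENNReal.ofReal (2 * π))⁻¹ *
    ∫⁻ φ in Ioc (-π) π,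
      {φ : ℝ | h φ ≤ h θ / 2 ∧ ‖circ φ - circ θ‖ ≤ δ}.indicator
        (fun φ => ENNReal.ofReal (Real.log (h θ / h φ))) φ

/-- `μ_h(θ)`. -/
def muH (h : ℝ → ℝ) (θ : ℝ) : ℝ :=
  sSup {μ : ℝ | μ ∈ Ioc (0 : ℝ) 1 ∧ ∀ δ : ℝ, 0 < δ → δ ≤ μ →
    ENNReal.ofReal δ * aH h δ θ ≤ 2 ∧ aTildeH h δ θ / ENNReal.ofReal δ ≤ 2}

/-- `𝕋_h`: the points where `O_h` has a radial limit of modulus `h(θ) ∈ (0,∞)`. -/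
def ThSet (h : ℝ → ℝ) : Set ℝ :=
  {θ : ℝ | 0 < h θ ∧
    Tendsto (fun r : ℝ => ‖outer h ((r : ℂ) * circ θ)‖)
      (nhdsWithin 1 (Iio 1)) (nhds (h θ))}

/-- `v_h`, the harmonic conjugate of the Poisson integral of `log h`. -/
def vH (h : ℝ → ℝ) (z : ℂ) : ℝ :=
  (2 * π)⁻¹ * ∫ φ in Ioc (-π) π, ((circ φ + z) / (circ φ - z)).im * Real.log (h φ)

/-- The angular partial derivative `(∂v_h/∂θ)(re^{iθ})`. -/
def dvTheta (h : ℝ → ℝ) (r θ : ℝ) : ℝ := deriv (fun t : ℝ => vH h ((r : ℂ) * circ t)) θ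

/-- The pseudohyperbolic-type disk `𝔻(z) = {w ∈ 𝔻 : |w - z| ≤ (1-r)/2}` at `z = re^{iθ}`. -/
def diskAt (r θ : ℝ) : Set ℂ :=
  Metric.closedBall ((r : ℂ) * circ θ) ((1 - r) / 2) ∩ Metric.ball 0 1

/-- `z = re^{iθ} ∈ 𝕂_h`. -/
def inK (h : ℝ → ℝ) (r θ : ℝ) : Prop :=
  θ ∈ ThSet h ∧ 2 * h θ ≤ ⨆ w ∈ diskAt r θ, ‖outer h w‖

/-- `z = re^{iθ} ∈ 𝕃_h = 𝔻_h \ 𝕂_h`. -/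
def inL (h : ℝ → ℝ) (r θ : ℝ) : Prop := θ ∈ ThSet h ∧ ¬ inK h r θ

/-- `ρ_{h,λ}(θ) = min{μ_h(θ), 2 a_{h,λ}(θ)⁻¹}` (in `ℝ≥0∞`). -/
def rhoH (h lam : ℝ → ℝ) (θ : ℝ) : ℝ≥0∞ :=
  min (ENNReal.ofReal (muH h θ)) (2 / aH h (lam θ) θ)

/-- `z = re^{iθ} ∈ 𝕃¹_{h,λ}`. -/
def inL1 (h lam : ℝ → ℝ) (r θ : ℝ) : Prop :=
  inL h r θ ∧ ENNReal.ofReal r ≤ 1 - rhoH h lam θ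

/-- `z = re^{iθ} ∈ 𝕃²_{h,λ}`. -/
def inL2 (h lam : ℝ → ℝ) (r θ : ℝ) : Prop :=
  inL h r θ ∧ 1 - rhoH h lam θ ≤ ENNReal.ofReal r

/-- `z = re^{iθ} ∈ 𝕄_h` (with `0 ≤ r < 1` imposed by the integration domain). -/
def inM (h : ℝ → ℝ) (r θ : ℝ) : Prop := θ ∈ ThSet h ∧ 1 - muH h θ ≤ r

/-- The kernel `Q(e^{iφ}, re^{iθ})`. -/
def Qker (r θ φ : ℝ) : ℝ :=
  r * (2 * (1 - r) ^ 2 - ‖circ θ - circ φ‖ ^ 2 * (1 + r ^ 2)) /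
    ‖circ φ - (r : ℂ) * circ θ‖ ^ 4

/-- The function `h_β` of the example, with `γ = π e^{2β/α}`. -/
def hBeta (α β : ℝ) (θ : ℝ) : ℝ :=
  if 0 < θ then θ ^ (-(α / 2)) * Real.log (π * Real.exp (2 * β / α) / θ) ^ (-β)
  else π ^ (-(α / 2)) * Real.log (π * Real.exp (2 * β / α) / π) ^ (-β)

/-- `𝒞_α(h)`. -/
def Cint (α : ℝ) (h : ℝ → ℝ) : ℝ≥0∞ :=
  ∫⁻ θ in Ioc (-π) π, ∫⁻ φ in Ioc (-π) π,
    ENNReal.ofReal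
      (((h φ) ^ 2 - (h θ) ^ 2) * Real.log (h φ / h θ) / ‖circ φ - circ θ‖ ^ (2 - α))

/-- The integral `(1/2π) ∫_𝔻 |O_h(z)|² (∂v_h/∂θ)(z) dA_α(z)`. -/
def Aint (α : ℝ) (h : ℝ → ℝ) : ℝ :=
  (2 * π)⁻¹ * ∫ θ in Ioc (-π) π, ∫ r in Ico (0 : ℝ) 1,
    α * (1 - r) ^ (α - 1) * (‖outer h ((r : ℂ) * circ θ)‖ ^ 2 * dvTheta h r θ)

/-- `∫_{𝕄_h} h²(θ) (∫_{φ ∈ 𝕋_h^-(θ), |e^{iφ}-e^{iθ}| ≤ μ_h(θ)} Q(e^{iφ},z) log(h(φ)/h(θ)) dφ) dA_α(z)`. -/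
def MQint (α : ℝ) (h : ℝ → ℝ) : ℝ :=
  ∫ θ in Ioc (-π) π, ∫ r in Ico (0 : ℝ) 1,
    {r : ℝ | inM h r θ}.indicator
      (fun r => α * (1 - r) ^ (α - 1) * ((h θ) ^ 2 *
        ∫ φ in Ioc (-π) π,
          {φ : ℝ | h φ ≤ h θ / 2 ∧ ‖circ φ - circ θ‖ ≤ muH h θ}.indicator
            (fun φ => Qker r θ φ * Real.log (h φ / h θ)) φ)) r

/-- `∫_{𝕄_h} h²(θ) (∂v_h/∂θ)(z) dA_α(z)`. -/
def MVint (α : ℝ) (h : ℝ → ℝ) : ℝ :=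
  ∫ θ in Ioc (-π) π, ∫ r in Ico (0 : ℝ) 1,
    {r : ℝ | inM h r θ}.indicator
      (fun r => α * (1 - r) ^ (α - 1) * ((h θ) ^ 2 * dvTheta h r θ)) r

/-!
For almost every `θ` the `limsup` is in fact `0`. Let `H` be the `2π`-periodic extension of `h`
and `s = 1 - r`. After recentring the period at `θ`, the kernel `(1 - r²)/|e^{iφ} - re^{iθ}|²`
is at most `π²` times the Poisson kernel `s/(s² + (φ - θ)²)` of the half-plane, and
`log (h φ / h θ) ≤ |log H φ - log H θ|`. Writing the Poisson kernel as the superposition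
`∫_{|u|}^∞ 2st/(s² + t²)² dt` of indicators of balls, its integral against
`g = |log H - log H θ|` is controlled by the means of `g` over the balls centred at `θ`; these tend
to `0` at every Lebesgue point `θ` of the locally integrable function `log H`.
-/

open Metric

theorem periodic_comp_toIocMod {β : Type*} {p : ℝ} (hp : 0 < p) (a : ℝ) (f : ℝ → β) :
    Function.Periodic (fun x => f (toIocMod hp a x)) p := fun x => by
  simp only [toIocMod_add_right]

theorem eqOn_comp_toIocMod {β : Type*} {p : ℝ} (hp : 0 < p) (a : ℝ) (f : ℝ → β) :
    EqOn (fun x => f (toIocMod hp a x)) f (Ioc a (a + p)) := fun x hx => by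
  simp only [(toIocMod_eq_self hp).2 hx]

theorem measurable_toIocMod {p : ℝ} (hp : 0 < p) (a : ℝ) : Measurable (toIocMod hp a) := by
  have : toIocMod hp a = fun b => b + (⌊(a + p - b) / p⌋ : ℝ) * p := by
    funext b
    simp only [toIocMod, toIocDiv_eq_neg_floor, zsmul_eq_mul, Int.cast_neg]
    ring
  rw [this]
  exact measurable_id.add <| (measurable_from_top.comp
    ((measurable_const.sub measurable_id).div_const p).floor).mul_const p

namespace Function.Periodic

theorem setLIntegral_Ioc_add_eq {f : ℝ → ℝ≥0∞} {T : ℝ} (hf : Periodic f T) (hT : 0 < T)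
    (t s : ℝ) : ∫⁻ x in Ioc t (t + T), f x = ∫⁻ x in Ioc s (s + T), f x := by
  have : VAddInvariantMeasure (AddSubgroup.zmultiples T) ℝ volume :=
    ⟨fun c s _ => measure_preimage_add _ _ _⟩
  exact (isAddFundamentalDomain_Ioc hT t).setLIntegral_eq (isAddFundamentalDomain_Ioc hT s) f
    hf.map_vadd_zmultiples

theorem locallyIntegrable {E : Type*} [NormedAddCommGroup E] {f : ℝ → E} {T t : ℝ}
    (hf : Periodic f T) (hT : 0 < T) (hint : IntegrableOn f (Ioc t (t + T))) :
    LocallyIntegrable f := fun x =>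
  ⟨Ioc (x - 1) (x + 1), Ioc_mem_nhds (by linarith) (by linarith),
    (hf.intervalIntegrable hT.ne'
      ((intervalIntegrable_iff_integrableOn_Ioc_of_le (by linarith)).2 hint) _ _).1⟩

end Function.Periodic

theorem Real.log_div_le_abs_log_sub (x y : ℝ) : Real.log (x / y) ≤ |Real.log x - Real.log y| := by
  rcases eq_or_ne x 0 with rfl | hx
  · simp
  rcases eq_or_ne y 0 with rfl | hy
  · simp
  exact (Real.log_div hx hy).trans_le (le_abs_self _)

theorem lintegral_Ioi_ofReal_deriv_eq {g g' : ℝ → ℝ} {a l : ℝ}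
    (hderiv : ∀ x ∈ Ici a, HasDerivAt g (g' x) x) (hg' : ∀ x ∈ Ioi a, 0 ≤ g' x)
    (hlim : Tendsto g atTop (𝓝 l)) :
    ∫⁻ x in Ioi a, ENNReal.ofReal (g' x) = ENNReal.ofReal (l - g a) := by
  rw [← integral_Ioi_of_hasDerivAt_of_nonneg' hderiv hg' hlim,
    ofReal_integral_eq_lintegral_ofReal (integrableOn_Ioi_deriv_of_nonneg' hderiv hg' hlim)]
  exact (ae_restrict_mem measurableSet_Ioi).mono hg'

section PoissonKernel

variable {s : ℝ}

theorem lintegral_Ioi_neg_deriv_poissonKernel (hs : 0 < s) {a : ℝ} (ha : 0 ≤ a) :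
    ∫⁻ t in Ioi a, ENNReal.ofReal (2 * s * t / (s ^ 2 + t ^ 2) ^ 2)
      = ENNReal.ofReal (s / (s ^ 2 + a ^ 2)) := by
  have hderiv (t : ℝ) :
      HasDerivAt (fun t : ℝ => -s / (s ^ 2 + t ^ 2)) (2 * s * t / (s ^ 2 + t ^ 2) ^ 2) t := by
    have hd : HasDerivAt (fun t : ℝ => s ^ 2 + t ^ 2) (2 * t) t := by
      simpa using (hasDerivAt_pow 2 t).const_add (s ^ 2)
    refine ((hasDerivAt_const t (-s)).div hd (by positivity)).congr_deriv ?_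
    ring
  have hlim : Tendsto (fun t : ℝ => -s / (s ^ 2 + t ^ 2)) atTop (𝓝 0) :=
    (tendsto_atTop_add_const_left _ _ (tendsto_pow_atTop two_ne_zero)).const_div_atTop _
  rw [lintegral_Ioi_ofReal_deriv_eq (fun t _ => hderiv t)
    (fun t ht => by have := ha.trans ht.le; positivity) hlim]
  simp [neg_div]

theorem lintegral_Ioi_mul_neg_deriv_poissonKernel (hs : 0 < s) :
    ∫⁻ t in Ioi (0 : ℝ), ENNReal.ofReal (2 * s * t ^ 2 / (s ^ 2 + t ^ 2) ^ 2)
      = ENNReal.ofReal (π / 2) := by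
  have hderiv (t : ℝ) : HasDerivAt (fun t : ℝ => Real.arctan (t / s) - s * t / (s ^ 2 + t ^ 2))
      (2 * s * t ^ 2 / (s ^ 2 + t ^ 2) ^ 2) t := by
    have h1 := (Real.hasDerivAt_arctan (t / s)).comp t ((hasDerivAt_id t).div_const s)
    have h2 := ((hasDerivAt_id t).const_mul s).div
      ((hasDerivAt_pow 2 t).const_add (s ^ 2)) (by positivity : s ^ 2 + t ^ 2 ≠ 0)
    refine (h1.sub h2).congr_deriv ?_
    simp only [id]
    field_simp
    ring
  have hlim : Tendsto (fun t : ℝ => Real.arctan (t / s) - s * t / (s ^ 2 + t ^ 2))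
      atTop (𝓝 (π / 2 - 0)) := by
    refine ((Real.tendsto_arctan_atTop.mono_right nhdsWithin_le_nhds).comp
      (tendsto_id.atTop_div_const hs)).sub ?_
    have hinv : Tendsto (fun t : ℝ => s * t⁻¹) atTop (𝓝 0) := by
      simpa using tendsto_inv_atTop_zero.const_mul s
    refine tendsto_of_tendsto_of_tendsto_of_le_of_le' tendsto_const_nhds hinv ?_ ?_ <;>
      filter_upwards [eventually_gt_atTop 0] with t ht
    · positivity
    · rw [div_le_iff₀ (by positivity)]
      field_simp
      nlinarith [pow_pos hs 3]
  rw [lintegral_Ioi_ofReal_deriv_eq (fun t _ => hderiv t) (fun t _ => by positivity) hlim]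
  simp

theorem setLIntegral_poissonKernel_mul_eq (hs : 0 < s) {g : ℝ → ℝ≥0∞} (hg : Measurable g)
    (θ : ℝ) (A : Set ℝ) :
    ∫⁻ u in A, ENNReal.ofReal (s / (s ^ 2 + (u - θ) ^ 2)) * g u
      = ∫⁻ t in Ioi 0, ENNReal.ofReal (2 * s * t / (s ^ 2 + t ^ 2) ^ 2) *
          ∫⁻ u in A ∩ ball θ t, g u := by
  set W : ℝ → ℝ≥0∞ := fun t => ENNReal.ofReal (2 * s * t / (s ^ 2 + t ^ 2) ^ 2)
  have hW : Measurable W := by unfold W; fun_prop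
  have hkernel (u : ℝ) : ENNReal.ofReal (s / (s ^ 2 + (u - θ) ^ 2))
      = ∫⁻ t in Ioi 0, (Ioi (dist u θ)).indicator W t := by
    rw [lintegral_indicator measurableSet_Ioi, Measure.restrict_restrict measurableSet_Ioi,
      inter_eq_left.2 (Ioi_subset_Ioi dist_nonneg),
      lintegral_Ioi_neg_deriv_poissonKernel hs dist_nonneg, Real.dist_eq, sq_abs]
  have hmeas : Measurable fun p : ℝ × ℝ => (Ioi (dist p.1 θ)).indicator W p.2 * g p.1 := by
    refine Measurable.mul ?_ (hg.comp measurable_fst)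
    simp only [indicator, mem_Ioi]
    exact Measurable.ite (measurableSet_lt (measurable_fst.dist measurable_const) measurable_snd)
      (hW.comp measurable_snd) measurable_const
  have hslice (t : ℝ) (u : ℝ) : (Ioi (dist u θ)).indicator W t * g u
      = (ball θ t).indicator (fun u => W t * g u) u := by
    by_cases hu : dist u θ < t <;> simp [indicator, mem_ball, hu]
  calc ∫⁻ u in A, ENNReal.ofReal (s / (s ^ 2 + (u - θ) ^ 2)) * g u
      = ∫⁻ u in A, ∫⁻ t in Ioi 0, (Ioi (dist u θ)).indicator W t * g u := by
        refine lintegral_congr fun u => ?_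
        rw [hkernel, lintegral_mul_const _ (hW.indicator measurableSet_Ioi)]
    _ = ∫⁻ t in Ioi 0, ∫⁻ u in A, (Ioi (dist u θ)).indicator W t * g u :=
        lintegral_lintegral_swap hmeas.aemeasurable
    _ = ∫⁻ t in Ioi 0, W t * ∫⁻ u in A ∩ ball θ t, g u := by
        refine lintegral_congr fun t => ?_
        rw [lintegral_congr (hslice t), lintegral_indicator measurableSet_ball,
          Measure.restrict_restrict measurableSet_ball, lintegral_const_mul _ hg, inter_comm]

theorem setLIntegral_poissonKernel_mul_le (hs : 0 < s) {g : ℝ → ℝ≥0∞} (hg : Measurable g)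
    (θ : ℝ) (A : Set ℝ) {t₀ ε M : ℝ} (ht₀ : 0 < t₀)
    (hsmall : ∀ t ∈ Ioc 0 t₀, ∫⁻ u in A ∩ ball θ t, g u ≤ ENNReal.ofReal (ε * t))
    (hmass : ∫⁻ u in A, g u ≤ ENNReal.ofReal M) :
    ∫⁻ u in A, ENNReal.ofReal (s / (s ^ 2 + (u - θ) ^ 2)) * g u
      ≤ ENNReal.ofReal ε * ENNReal.ofReal (π / 2) +
          ENNReal.ofReal (s / t₀ ^ 2) * ENNReal.ofReal M := by
  rw [setLIntegral_poissonKernel_mul_eq hs hg θ A, ← Ioc_union_Ioi_eq_Ioi ht₀.le,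
    lintegral_union measurableSet_Ioi Ioc_disjoint_Ioi_same]
  gcongr
  · calc ∫⁻ t in Ioc 0 t₀, ENNReal.ofReal (2 * s * t / (s ^ 2 + t ^ 2) ^ 2) *
            ∫⁻ u in A ∩ ball θ t, g u
        ≤ ∫⁻ t in Ioc 0 t₀, ENNReal.ofReal ε *
            ENNReal.ofReal (2 * s * t ^ 2 / (s ^ 2 + t ^ 2) ^ 2) := by
          refine setLIntegral_mono' measurableSet_Ioc fun t ht => ?_
          grw [hsmall t ht, ← ENNReal.ofReal_mul (by have := ht.1; positivity),
            ← ENNReal.ofReal_mul' (by have := ht.1; positivity)]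
          exact le_of_eq (by congr 1; ring)
      _ ≤ ENNReal.ofReal ε *
            ∫⁻ t in Ioi 0, ENNReal.ofReal (2 * s * t ^ 2 / (s ^ 2 + t ^ 2) ^ 2) := by
          rw [lintegral_const_mul _ (by fun_prop)]
          gcongr
          exact Ioc_subset_Ioi_self
      _ = ENNReal.ofReal ε * ENNReal.ofReal (π / 2) := by
          rw [lintegral_Ioi_mul_neg_deriv_poissonKernel hs]
  · calc ∫⁻ t in Ioi t₀, ENNReal.ofReal (2 * s * t / (s ^ 2 + t ^ 2) ^ 2) *
            ∫⁻ u in A ∩ ball θ t, g u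
        ≤ ∫⁻ t in Ioi t₀, ENNReal.ofReal (2 * s * t / (s ^ 2 + t ^ 2) ^ 2) * ENNReal.ofReal M := by
          gcongr with t
          exact (lintegral_mono_set inter_subset_left).trans hmass
      _ = ENNReal.ofReal (s / (s ^ 2 + t₀ ^ 2)) * ENNReal.ofReal M := by
          rw [lintegral_mul_const _ (by fun_prop),
            lintegral_Ioi_neg_deriv_poissonKernel hs ht₀.le]
      _ ≤ ENNReal.ofReal (s / t₀ ^ 2) * ENNReal.ofReal M := by
          gcongr
          exact le_add_of_nonneg_left (sq_nonneg s)

theorem tendsto_setLIntegral_poissonKernel_mul {g : ℝ → ℝ≥0∞} (hg : Measurable g) {θ R : ℝ}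
    (hfin : ∫⁻ u in closedBall θ R, g u ≠ ∞)
    (hleb : Tendsto (fun t => (∫⁻ u in closedBall θ t, g u) /
      volume (closedBall θ t)) (𝓝[>] 0) (𝓝 0)) :
    Tendsto (fun s => ∫⁻ u in closedBall θ R,
      ENNReal.ofReal (s / (s ^ 2 + (u - θ) ^ 2)) * g u) (𝓝[>] 0) (𝓝 0) := by
  rw [ENNReal.tendsto_nhds_zero]
  intro η hη
  obtain ⟨e, -, he0, heη⟩ := ENNReal.lt_iff_exists_real_btwn.1 hη
  have he : 0 < e := ENNReal.ofReal_pos.1 he0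
  obtain ⟨t₀, ht₀ : 0 < t₀, hsub⟩ := mem_nhdsGT_iff_exists_Ioc_subset.1
    (hleb (Iio_mem_nhds (ENNReal.ofReal_pos.2 (by positivity : 0 < e / (2 * π)))))
  have hsmall : ∀ t ∈ Ioc 0 t₀, ∫⁻ u in closedBall θ R ∩ ball θ t, g u
      ≤ ENNReal.ofReal (e / π * t) := by
    intro t ht
    have hratio : (∫⁻ u in closedBall θ t, g u) / volume (closedBall θ t)
        ≤ ENNReal.ofReal (e / (2 * π)) := le_of_lt (hsub ht)
    rw [Real.volume_closedBall,
      ENNReal.div_le_iff (by simpa using ht.1) ENNReal.ofReal_ne_top] at hratio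
    calc ∫⁻ u in closedBall θ R ∩ ball θ t, g u
        ≤ ∫⁻ u in closedBall θ t, g u :=
          lintegral_mono_set (inter_subset_right.trans ball_subset_closedBall)
      _ ≤ ENNReal.ofReal (e / (2 * π)) * ENNReal.ofReal (2 * t) := hratio
      _ = ENNReal.ofReal (e / π * t) := by
          rw [← ENNReal.ofReal_mul (by positivity)]
          congr 1
          field_simp
  obtain ⟨M, hM, hmass⟩ : ∃ M, 0 ≤ M ∧ ∫⁻ u in closedBall θ R, g u ≤ ENNReal.ofReal M :=
    ⟨_, ENNReal.toReal_nonneg, (ENNReal.ofReal_toReal hfin).ge⟩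
  have hM1 : 0 < 2 * (M + 1) := by linarith
  filter_upwards [Ioo_mem_nhdsGT (div_pos (by positivity : 0 < e * t₀ ^ 2) hM1)] with s hs
  have hst : 0 ≤ s / t₀ ^ 2 := div_nonneg hs.1.le (sq_nonneg t₀)
  have hMs : M * (s / t₀ ^ 2) ≤ e / 2 := by
    have := (lt_div_iff₀ hM1).1 hs.2
    rw [← mul_div_assoc, div_le_iff₀ (by positivity)]
    nlinarith [hs.1]
  calc ∫⁻ u in closedBall θ R, ENNReal.ofReal (s / (s ^ 2 + (u - θ) ^ 2)) * g u
      ≤ ENNReal.ofReal (e / π) * ENNReal.ofReal (π / 2) +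
          ENNReal.ofReal (s / t₀ ^ 2) * ENNReal.ofReal M :=
        setLIntegral_poissonKernel_mul_le hs.1 hg θ _ ht₀ hsmall hmass
    _ = ENNReal.ofReal (e / 2) + ENNReal.ofReal (M * (s / t₀ ^ 2)) := by
        rw [← ENNReal.ofReal_mul (by positivity), ← ENNReal.ofReal_mul hst]
        congr 2
        · field_simp
        · ring
    _ ≤ ENNReal.ofReal e := by
        rw [← ENNReal.ofReal_add (by positivity) (mul_nonneg hM hst)]
        exact ENNReal.ofReal_le_ofReal (by linarith)
    _ ≤ η := heη.le

end PoissonKernel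

theorem ae_tendsto_setLIntegral_closedBall_enorm_sub_div {α E : Type*} [MetricSpace α]
    [MeasurableSpace α] [BorelSpace α] [SecondCountableTopology α] {μ : Measure α}
    [IsUnifLocDoublingMeasure μ] [IsLocallyFiniteMeasure μ] [NormedAddCommGroup E]
    {f : α → E} (hf : LocallyIntegrable f μ) :
    ∀ᵐ x ∂μ, Tendsto (fun t => (∫⁻ y in closedBall x t, ‖f y - f x‖ₑ ∂μ) /
      μ (closedBall x t)) (𝓝[>] 0) (𝓝 0) := by
  filter_upwards [(IsUnifLocDoublingMeasure.vitaliFamily μ 1).ae_tendsto_lintegral_enorm_sub_div hf]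
    with x hx
  refine hx.comp (IsUnifLocDoublingMeasure.tendsto_closedBall_filterAt μ (fun _ => x) id
    tendsto_id ?_)
  filter_upwards [self_mem_nhdsWithin] with t ht
  exact mem_closedBall_self (by simpa using ht.le)

theorem circ_periodic : Function.Periodic circ (2 * π) := fun t => by
  simp only [circ]
  push_cast
  rw [add_mul, Complex.exp_add, Complex.exp_two_pi_mul_I, mul_one]

theorem norm_circ_sub_ofReal_mul_circ_sq (r θ φ : ℝ) :
    ‖circ φ - (r : ℂ) * circ θ‖ ^ 2 = (1 - r) ^ 2 + 2 * r * (1 - Real.cos (φ - θ)) := by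
  rw [Complex.sq_norm, Complex.normSq_apply]
  simp only [circ, Complex.sub_re, Complex.sub_im, Complex.mul_re, Complex.mul_im,
    Complex.ofReal_re, Complex.ofReal_im, Complex.exp_ofReal_mul_I_re,
    Complex.exp_ofReal_mul_I_im, zero_mul, sub_zero, add_zero, Real.cos_sub]
  linear_combination Real.sin_sq_add_cos_sq φ + r ^ 2 * Real.sin_sq_add_cos_sq θ

theorem div_norm_circ_sub_ofReal_mul_circ_sq_le {r θ φ : ℝ} (hr : 1 / 2 ≤ r) (hr1 : r < 1)
    (hφ : |φ - θ| ≤ π) :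
    (1 - r ^ 2) / ‖circ φ - (r : ℂ) * circ θ‖ ^ 2
      ≤ π ^ 2 * ((1 - r) / ((1 - r) ^ 2 + (φ - θ) ^ 2)) := by
  have hpi : 2 / π ^ 2 ≤ 1 := by
    rw [div_le_one (by positivity)]; nlinarith [Real.pi_gt_three]
  have hcos := Real.cos_le_one_sub_mul_cos_sq hφ
  have hD : 0 < (1 - r) ^ 2 + (φ - θ) ^ 2 := by positivity
  have hden : 2 / π ^ 2 * ((1 - r) ^ 2 + (φ - θ) ^ 2) ≤ ‖circ φ - (r : ℂ) * circ θ‖ ^ 2 := by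
    rw [norm_circ_sub_ofReal_mul_circ_sq]
    nlinarith [sq_nonneg (1 - r), sq_nonneg (φ - θ),
      mul_nonneg (by positivity : (0 : ℝ) ≤ 2 / π ^ 2) (sq_nonneg (φ - θ))]
  calc (1 - r ^ 2) / ‖circ φ - (r : ℂ) * circ θ‖ ^ 2
      ≤ 2 * (1 - r) / (2 / π ^ 2 * ((1 - r) ^ 2 + (φ - θ) ^ 2)) :=
        div_le_div₀ (by linarith) (by nlinarith) (by positivity) hden
    _ = π ^ 2 * ((1 - r) / ((1 - r) ^ 2 + (φ - θ) ^ 2)) := by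
        field_simp

theorem lintegral_poissonKernel_mul_log_div_le {H : ℝ → ℝ} (hH : Function.Periodic H (2 * π))
    (θ : ℝ) {r : ℝ} (hr : 1 / 2 ≤ r) (hr1 : r < 1) :
    ∫⁻ φ in Ioc (-π) π,
        ENNReal.ofReal ((1 - r ^ 2) / ‖circ φ - (r : ℂ) * circ θ‖ ^ 2 * Real.log (H φ / H θ))
      ≤ ENNReal.ofReal (π ^ 2) * ∫⁻ φ in closedBall θ π,
          ENNReal.ofReal ((1 - r) / ((1 - r) ^ 2 + (φ - θ) ^ 2)) *
            ‖Real.log (H φ) - Real.log (H θ)‖ₑ := by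
  have hper : Function.Periodic (fun φ => ENNReal.ofReal
      ((1 - r ^ 2) / ‖circ φ - (r : ℂ) * circ θ‖ ^ 2 * Real.log (H φ / H θ))) (2 * π) :=
    fun φ => by simp only [hH φ, circ_periodic φ]
  have hrecenter := hper.setLIntegral_Ioc_add_eq Real.two_pi_pos (-π) (θ - π)
  rw [show -π + 2 * π = π by ring, show θ - π + 2 * π = θ + π by ring] at hrecenter
  rw [hrecenter, ← lintegral_const_mul' _ _ ENNReal.ofReal_ne_top]
  calc ∫⁻ φ in Ioc (θ - π) (θ + π),
        ENNReal.ofReal ((1 - r ^ 2) / ‖circ φ - (r : ℂ) * circ θ‖ ^ 2 * Real.log (H φ / H θ))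
      ≤ ∫⁻ φ in Ioc (θ - π) (θ + π), ENNReal.ofReal (π ^ 2) *
          (ENNReal.ofReal ((1 - r) / ((1 - r) ^ 2 + (φ - θ) ^ 2)) *
            ‖Real.log (H φ) - Real.log (H θ)‖ₑ) := by
        refine setLIntegral_mono' measurableSet_Ioc fun φ hφ => ?_
        have hφθ : |φ - θ| ≤ π := abs_le.2 ⟨by linarith [hφ.1], by linarith [hφ.2]⟩
        have hK : 0 ≤ (1 - r ^ 2) / ‖circ φ - (r : ℂ) * circ θ‖ ^ 2 := by
          have : r ^ 2 ≤ 1 := by nlinarith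
          positivity
        rw [Real.enorm_eq_ofReal_abs, ← mul_assoc, ← ENNReal.ofReal_mul (sq_nonneg π),
          ← ENNReal.ofReal_mul (by positivity)]
        exact ENNReal.ofReal_le_ofReal <|
          (mul_le_mul_of_nonneg_left (Real.log_div_le_abs_log_sub _ _) hK).trans <|
            mul_le_mul_of_nonneg_right (div_norm_circ_sub_ofReal_mul_circ_sq_le hr hr1 hφθ)
              (abs_nonneg _)
    _ ≤ _ := by
        refine lintegral_mono_set ?_
        rw [Real.closedBall_eq_Icc]
        exact Ioc_subset_Icc_self

theorem tendsto_lintegral_poissonKernel_mul_log_div {H : ℝ → ℝ}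
    (hH : Function.Periodic H (2 * π)) (hHmeas : Measurable H)
    (hint : LocallyIntegrable fun φ => Real.log (H φ)) {θ : ℝ}
    (hθ : Tendsto (fun t => (∫⁻ φ in closedBall θ t, ‖Real.log (H φ) - Real.log (H θ)‖ₑ) /
      volume (closedBall θ t)) (𝓝[>] 0) (𝓝 0)) :
    Tendsto (fun r : ℝ => ∫⁻ φ in Ioc (-π) π,
        ENNReal.ofReal ((1 - r ^ 2) / ‖circ φ - (r : ℂ) * circ θ‖ ^ 2 * Real.log (H φ / H θ)))
      (𝓝[<] 1) (𝓝 0) := by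
  have hfin : ∫⁻ φ in closedBall θ π, ‖Real.log (H φ) - Real.log (H θ)‖ₑ ≠ ∞ :=
    ((hint.integrableOn_isCompact (isCompact_closedBall θ π)).sub
      (integrableOn_const measure_closedBall_lt_top.ne)).2.ne
  have hpoisson := tendsto_setLIntegral_poissonKernel_mul
    (hHmeas.log.sub measurable_const).enorm hfin hθ
  have hs : Tendsto (fun r : ℝ => 1 - r) (𝓝[<] 1) (𝓝[>] 0) :=
    tendsto_nhdsWithin_iff.2 ⟨((continuous_const.sub continuous_id).tendsto' 1 0
      (sub_self 1)).mono_left nhdsWithin_le_nhds,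
      eventually_nhdsWithin_of_forall fun r (hr : r < 1) => show 0 < 1 - r by linarith⟩
  have hupper := ENNReal.Tendsto.const_mul (hpoisson.comp hs)
    (Or.inr (ENNReal.ofReal_ne_top (r := π ^ 2)))
  rw [mul_zero] at hupper
  refine tendsto_of_tendsto_of_tendsto_of_le_of_le' tendsto_const_nhds hupper
    (Eventually.of_forall fun _ => zero_le) ?_
  filter_upwards [Ioo_mem_nhdsLT (by norm_num : (1 / 2 : ℝ) < 1)] with r hr
  exact lintegral_poissonKernel_mul_log_div_le hH θ hr.1.le hr.2

theorem statement9_general (h : ℝ → ℝ) (hmeas : Measurable h)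
    (hlog : IntegrableOn (fun t => Real.log (h t)) (Ioc (-π) π) volume)
    (δ : ℝ) (hδ : 0 < δ) :
    volume {θ ∈ Ioc (-π) π | θ ∈ ThSet h ∧
      ENNReal.ofReal δ ≤
        Filter.limsup (fun r : ℝ =>
            (ENNReal.ofReal (2 * π))⁻¹ *
              ∫⁻ φ in Ioc (-π) π,
                {φ : ℝ | 2 * h θ ≤ h φ}.indicator
                  (fun φ => ENNReal.ofReal ((1 - r ^ 2) / ‖circ φ - (r : ℂ) * circ θ‖ ^ 2 *
                    Real.log (h φ / h θ))) φ)
          (nhdsWithin 1 (Iio 1))} = 0 := by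
  set H : ℝ → ℝ := fun φ => h (toIocMod Real.two_pi_pos (-π) φ)
  have hH : Function.Periodic H (2 * π) := periodic_comp_toIocMod _ _ h
  have hπ : -π + 2 * π = π := by ring
  have hHh : EqOn H h (Ioc (-π) π) := fun φ hφ =>
    eqOn_comp_toIocMod Real.two_pi_pos (-π) h (by rwa [hπ])
  have hF : LocallyIntegrable fun φ => Real.log (H φ) :=
    (hH.comp Real.log).locallyIntegrable Real.two_pi_pos (t := -π) <| by
      rw [hπ]
      exact hlog.congr_fun (fun φ hφ => by simp [hHh hφ]) measurableSet_Ioc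
  have h2π : (ENNReal.ofReal (2 * π))⁻¹ ≤ 1 :=
    ENNReal.inv_le_one.2 (ENNReal.one_le_ofReal.2 (by linarith [Real.pi_gt_three]))
  refine measure_eq_zero_iff_ae_notMem.2 ?_
  filter_upwards [ae_tendsto_setLIntegral_closedBall_enorm_sub_div hF] with θ hθ
  rintro ⟨hθI, -, hlim⟩
  have hlim0 := (tendsto_lintegral_poissonKernel_mul_log_div hH
    (hmeas.comp (measurable_toIocMod _ _)) hF hθ).limsup_eq
  refine (ENNReal.ofReal_pos.2 hδ).not_ge (hlim.trans ((limsup_le_limsup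
    (Eventually.of_forall fun r => ?_)).trans hlim0.le))
  exact (mul_le_of_le_one_left' h2π).trans (setLIntegral_mono' measurableSet_Ioc fun φ hφ =>
    (indicator_le_self _ _ φ).trans_eq (by rw [hHh hφ, hHh hθI]))

/-- the sets `𝕋_{h,δ}` have zero Lebesgue measure. -/
theorem statement9 (α : ℝ) (hα0 : 0 < α) (hα1 : α < 1)
    (h : ℝ → ℝ) (hmeas : Measurable h) (hnonneg : ∀ t, 0 ≤ h t)
    (hL2 : IntegrableOn (fun t => (h t) ^ 2) (Ioc (-π) π) volume)
    (hlog : IntegrableOn (fun t => Real.log (h t)) (Ioc (-π) π) volume)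
    (hN : Nint α h < ⊤) (δ : ℝ) (hδ : 0 < δ) :
    volume {θ ∈ Ioc (-π) π | θ ∈ ThSet h ∧
      ENNReal.ofReal δ ≤
        Filter.limsup (fun r : ℝ =>
            (ENNReal.ofReal (2 * π))⁻¹ *
              ∫⁻ φ in Ioc (-π) π,
                {φ : ℝ | 2 * h θ ≤ h φ}.indicator
                  (fun φ => ENNReal.ofReal ((1 - r ^ 2) / ‖circ φ - (r : ℂ) * circ θ‖ ^ 2 *
                    Real.log (h φ / h θ))) φ)
          (nhdsWithin 1 (Iio 1))} = 0 :=
  statement9_general h hmeas hlog δ hδ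
end
end

section
/- There exists a constant c > 0, independent of α, such that for all real numbers 0 < α < 1, 0 < μ ≤ 1 and 0 < u ≤ 2 with u ≤ μ, one has (1/(1-α)) ∫_{1-μ}^{1} ((r u² - (1-r)²)/(((1-r)² + r u²)²)) (1-r)^{α-1} r dr ≥ c u^{α-2}. -/
open MeasureTheory Real Set Filter
open scoped ENNReal NNReal Topology

noncomputable section

/-! The integrand is `g - F'`, where `F r = (1 - r) ^ α * r / ((1 - r) ^ 2 + r * u ^ 2)` vanishes
at `r = 1` and is nonnegative, and `g ≥ 0`. Hence the integral dominates `∫ g`, and on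
`(1 - u / 2, 1)` the bound `g r ≥ (1 - α) (1 - r) ^ (α - 1) / (4 u ^ 2)` integrates to
`(1 - α) (u / 2) ^ α / (4 α u ^ 2)`, which is at least `(1 - α) u ^ (α - 2) / 8`. -/

namespace RadialIntegral

variable {α u r : ℝ}

def den (u r : ℝ) : ℝ := (1 - r) ^ 2 + r * u ^ 2

def integrand (α u r : ℝ) : ℝ :=
  (r * u ^ 2 - (1 - r) ^ 2) / den u r ^ 2 * (1 - r) ^ (α - 1) * r

def boundaryTerm (α u r : ℝ) : ℝ := (1 - r) ^ α * r / den u r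

def dominantPart (α u r : ℝ) : ℝ :=
  (1 - r) ^ (α - 1) * (((1 - α) * r * den u r + (1 - r) ^ 3) / den u r ^ 2)

lemma sq_div_four_le_den (hu : u ^ 2 ≤ 1) (hr₀ : 0 ≤ r) :
    u ^ 2 / 4 ≤ den u r := by
  unfold den
  rcases le_or_gt r (1 / 2) with h | h
  · nlinarith [mul_nonneg hr₀ (sq_nonneg u)]
  · nlinarith [sq_nonneg (1 - r), sq_nonneg u]

lemma den_pos (hu : u ≠ 0) (hr₀ : 0 ≤ r) : 0 < den u r := by
  rcases hr₀.eq_or_lt with rfl | hr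
  · simp [den]
  · unfold den
    positivity

lemma hasDerivAt_boundaryTerm (hu : u ≠ 0) (hr₀ : 0 ≤ r) (hr₁ : r < 1) :
    HasDerivAt (boundaryTerm α u) (dominantPart α u r - integrand α u r) r := by
  have h1r : 0 < 1 - r := by linarith
  have hD := den_pos hu hr₀
  have hsub : HasDerivAt (fun r : ℝ => 1 - r) (-1) r := by
    simpa using (hasDerivAt_id r).const_sub 1
  have hnum : HasDerivAt (fun r => (1 - r) ^ α * r)
      (-1 * α * (1 - r) ^ (α - 1) * r + (1 - r) ^ α * 1) r :=
    (hsub.rpow_const (Or.inl h1r.ne')).mul (hasDerivAt_id r)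
  have hden : HasDerivAt (fun r => (1 - r) ^ 2 + r * u ^ 2)
      ((2 : ℕ) * (1 - r) ^ (2 - 1) * (-1) + 1 * u ^ 2) r :=
    (hsub.pow 2).add ((hasDerivAt_id r).mul_const (u ^ 2))
  refine (hnum.div hden hD.ne').congr_deriv ?_
  have hpow : (1 - r) ^ α = (1 - r) ^ (α - 1) * (1 - r) := by
    rw [← rpow_add_one h1r.ne', sub_add_cancel]
  simp only [dominantPart, integrand, hpow]
  field_simp
  unfold den
  ring

lemma continuousOn_boundaryTerm (hα : 0 ≤ α) (hu : u ≠ 0) :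
    ContinuousOn (boundaryTerm α u) (Icc 0 1) := by
  refine ContinuousOn.div ?_ (by unfold den; fun_prop) fun r hr => (den_pos hu hr.1).ne'
  exact ((continuousOn_const.sub continuousOn_id).rpow_const fun _ _ => Or.inr hα).mul
    continuousOn_id

lemma abs_integrand_le (hu : u ≠ 0) (hu₁ : u ^ 2 ≤ 1) (hr₀ : 0 ≤ r) (hr₁ : r ≤ 1) :
    |integrand α u r| ≤ 4 / u ^ 2 * (1 - r) ^ (α - 1) := by
  have hD := den_pos hu hr₀
  have hD4 := sq_div_four_le_den hu₁ hr₀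
  have hw : 0 ≤ (1 - r) ^ (α - 1) := rpow_nonneg (by linarith) _
  have hnum : |r * u ^ 2 - (1 - r) ^ 2| ≤ den u r := by
    unfold den
    rw [abs_le]
    constructor <;> nlinarith [mul_nonneg hr₀ (sq_nonneg u), sq_nonneg (1 - r)]
  have hquot : |r * u ^ 2 - (1 - r) ^ 2| / den u r ^ 2 ≤ 4 / u ^ 2 := by
    rw [div_le_div_iff₀ (by positivity) (by positivity)]
    nlinarith [mul_le_mul hnum hD4 (by positivity) hD.le]
  rw [integrand, abs_mul, abs_mul, abs_div, abs_of_nonneg hw, abs_of_nonneg hr₀,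
    abs_of_pos (pow_pos hD 2)]
  simpa using mul_le_mul (mul_le_mul_of_nonneg_right hquot hw) hr₁ hr₀ (by positivity)

lemma dominantPart_nonneg (hα : α ≤ 1) (hu : u ≠ 0) (hr₀ : 0 ≤ r) (hr₁ : r ≤ 1) :
    0 ≤ dominantPart α u r := by
  have hD := den_pos hu hr₀
  have h1r : 0 ≤ 1 - r := by linarith
  have h1α : 0 ≤ 1 - α := by linarith
  unfold dominantPart
  positivity

lemma dominantPart_le (hα₀ : 0 ≤ α) (hu : u ≠ 0) (hu₁ : u ^ 2 ≤ 1) (hr₀ : 0 ≤ r) (hr₁ : r ≤ 1) :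
    dominantPart α u r ≤ 8 / u ^ 2 * (1 - r) ^ (α - 1) := by
  have hD := den_pos hu hr₀
  have hD4 := sq_div_four_le_den hu₁ hr₀
  have hw : 0 ≤ (1 - r) ^ (α - 1) := rpow_nonneg (by linarith) _
  have hnum : (1 - α) * r * den u r + (1 - r) ^ 3 ≤ 2 * den u r := by
    have : (1 - r) ^ 3 ≤ den u r := by
      unfold den; nlinarith [mul_nonneg hr₀ (sq_nonneg u), pow_nonneg (sub_nonneg.2 hr₁) 2]
    nlinarith [mul_nonneg (mul_nonneg hα₀ hr₀) hD.le]
  have hquot : ((1 - α) * r * den u r + (1 - r) ^ 3) / den u r ^ 2 ≤ 8 / u ^ 2 := by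
    rw [div_le_div_iff₀ (by positivity) (by positivity)]
    nlinarith [mul_le_mul hnum hD4 (by positivity) (by linarith : (0:ℝ) ≤ 2 * den u r)]
  rw [dominantPart, mul_comm]
  gcongr

lemma integrableOn_one_sub_rpow (hα : 0 < α) (a : ℝ) :
    IntegrableOn (fun r : ℝ => (1 - r) ^ (α - 1)) (Ioc a 1) := by
  have h : IntervalIntegrable (fun x : ℝ => x ^ (α - 1)) volume 0 (1 - a) :=
    intervalIntegral.intervalIntegrable_rpow' (by linarith)
  simpa using (h.comp_sub_left 1).symm.1

lemma integral_one_sub_rpow (hα : 0 < α) {δ : ℝ} (hδ : 0 ≤ δ) :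
    ∫ r in Ioo (1 - δ) 1, (1 - r) ^ (α - 1) = δ ^ α / α := by
  rw [← integral_Ioc_eq_integral_Ioo, ← intervalIntegral.integral_of_le (by linarith),
    intervalIntegral.integral_comp_sub_left (fun x : ℝ => x ^ (α - 1)), sub_self, sub_sub_cancel,
    integral_rpow (Or.inl (by linarith)), sub_add_cancel, zero_rpow hα.ne', sub_zero]

variable {a : ℝ}

lemma integrableOn_integrand (hα : 0 < α) (hu : u ≠ 0) (hu₁ : u ^ 2 ≤ 1) (ha : 0 ≤ a) :
    IntegrableOn (integrand α u) (Ioc a 1) := by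
  refine Integrable.mono' ((integrableOn_one_sub_rpow hα a).const_mul (4 / u ^ 2))
    (by unfold integrand den; fun_prop) ?_
  filter_upwards [ae_restrict_mem measurableSet_Ioc] with r hr
  exact abs_integrand_le hu hu₁ (ha.trans hr.1.le) hr.2

lemma integrableOn_dominantPart (hα : 0 < α) (hα₁ : α ≤ 1) (hu : u ≠ 0) (hu₁ : u ^ 2 ≤ 1)
    (ha : 0 ≤ a) :
    IntegrableOn (dominantPart α u) (Ioc a 1) := by
  refine Integrable.mono' ((integrableOn_one_sub_rpow hα a).const_mul (8 / u ^ 2))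
    (by unfold dominantPart den; fun_prop) ?_
  filter_upwards [ae_restrict_mem measurableSet_Ioc] with r hr
  have hr₀ := ha.trans hr.1.le
  rw [Real.norm_eq_abs, abs_of_nonneg (dominantPart_nonneg hα₁ hu hr₀ hr.2)]
  exact dominantPart_le hα.le hu hu₁ hr₀ hr.2

lemma setIntegral_dominantPart_le_setIntegral_integrand (hα₀ : 0 < α) (hα₁ : α ≤ 1) (hu : u ≠ 0)
    (hu₁ : u ^ 2 ≤ 1) (ha₀ : 0 ≤ a) (ha₁ : a ≤ 1) :
    ∫ r in Ioo a 1, dominantPart α u r ≤ ∫ r in Ioo a 1, integrand α u r := by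
  have hf := integrableOn_integrand hα₀ hu hu₁ ha₀
  have hg := integrableOn_dominantPart hα₀ hα₁ hu hu₁ ha₀
  have hFTC : ∫ r in a..1, (dominantPart α u r - integrand α u r) =
      boundaryTerm α u 1 - boundaryTerm α u a :=
    intervalIntegral.integral_eq_sub_of_hasDerivAt_of_le ha₁
      ((continuousOn_boundaryTerm hα₀.le hu).mono (Icc_subset_Icc_left ha₀))
      (fun r hr => hasDerivAt_boundaryTerm hu (ha₀.trans hr.1.le) hr.2)
      ((intervalIntegrable_iff_integrableOn_Ioc_of_le ha₁).2 (hg.sub hf))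
  rw [intervalIntegral.integral_of_le ha₁, integral_Ioc_eq_integral_Ioo,
    integral_sub (hg.mono_set Ioo_subset_Ioc_self) (hf.mono_set Ioo_subset_Ioc_self)] at hFTC
  have hF₁ : boundaryTerm α u 1 = 0 := by simp [boundaryTerm, zero_rpow hα₀.ne']
  have hFa : 0 ≤ boundaryTerm α u a :=
    div_nonneg (mul_nonneg (rpow_nonneg (by linarith) _) ha₀) (den_pos hu ha₀).le
  linarith

lemma dominantPart_ge (hα : α ≤ 1) (hu₀ : 0 < u) (hu₁ : u ≤ 1) (hr : r ∈ Ioo (1 - u / 2) 1) :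
    (1 - α) / (4 * u ^ 2) * (1 - r) ^ (α - 1) ≤ dominantPart α u r := by
  obtain ⟨hr₀, hr₁⟩ := hr
  have h1r : 0 ≤ 1 - r := by linarith
  have h1α : 0 ≤ 1 - α := by linarith
  have hD := den_pos hu₀.ne' (by linarith : 0 ≤ r)
  have hD₂ : den u r ≤ 2 * u ^ 2 := by unfold den; nlinarith
  have hnum : (1 - α) * den u r / 2 ≤ (1 - α) * r * den u r + (1 - r) ^ 3 := by
    nlinarith [pow_nonneg h1r 3, mul_nonneg h1α hD.le]
  rw [dominantPart, mul_comm]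
  refine mul_le_mul_of_nonneg_left ?_ (rpow_nonneg h1r _)
  rw [div_le_div_iff₀ (by positivity) (by positivity)]
  nlinarith [mul_le_mul_of_nonneg_left hD₂ (mul_nonneg h1α hD.le),
    mul_le_mul_of_nonneg_right hnum (by positivity : (0:ℝ) ≤ 4 * u ^ 2)]

lemma integral_integrand_ge {μ : ℝ} (hα₀ : 0 < α) (hα₁ : α ≤ 1) (hu₀ : 0 < u) (huμ : u ≤ μ)
    (hμ : μ ≤ 1) :
    (1 - α) / (4 * u ^ 2) * ((u / 2) ^ α / α) ≤ ∫ r in Ioo (1 - μ) 1, integrand α u r := by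
  have hu₁ : u ≤ 1 := huμ.trans hμ
  have hsq : u ^ 2 ≤ 1 := by nlinarith
  have hsub : Ioo (1 - u / 2) 1 ⊆ Ioc (1 - μ) 1 :=
    (Ioo_subset_Ioo_left (by linarith)).trans Ioo_subset_Ioc_self
  have hg := integrableOn_dominantPart hα₀ hα₁ hu₀.ne' hsq (a := 1 - μ) (by linarith)
  calc (1 - α) / (4 * u ^ 2) * ((u / 2) ^ α / α)
      = ∫ r in Ioo (1 - u / 2) 1, (1 - α) / (4 * u ^ 2) * (1 - r) ^ (α - 1) := by
        rw [integral_const_mul, integral_one_sub_rpow hα₀ (by linarith)]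
    _ ≤ ∫ r in Ioo (1 - u / 2) 1, dominantPart α u r :=
        setIntegral_mono_on (((integrableOn_one_sub_rpow hα₀ _).mono_set
          Ioo_subset_Ioc_self).const_mul _) (hg.mono_set hsub) measurableSet_Ioo
          fun r hr => dominantPart_ge hα₁ hu₀ hu₁ hr
    _ ≤ ∫ r in Ioo (1 - μ) 1, dominantPart α u r := by
        refine setIntegral_mono_set (hg.mono_set Ioo_subset_Ioc_self) ?_
          (Ioo_subset_Ioo_left (by linarith)).eventuallyLE
        filter_upwards [ae_restrict_mem measurableSet_Ioo] with r hr
        exact dominantPart_nonneg hα₁ hu₀.ne' (by linarith [hr.1]) hr.2.le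
    _ ≤ ∫ r in Ioo (1 - μ) 1, integrand α u r :=
        setIntegral_dominantPart_le_setIntegral_integrand hα₀ hα₁ hu₀.ne' hsq (by linarith)
          (by linarith)

end RadialIntegral

/-- the elementary one-dimensional integral estimate. -/
theorem statement16 :
    ∃ c : ℝ, 0 < c ∧
      ∀ α μ u : ℝ, 0 < α → α < 1 → 0 < μ → μ ≤ 1 → 0 < u → u ≤ 2 → u ≤ μ →
        c * u ^ (α - 2) ≤
          (1 / (1 - α)) *
            ∫ r in Ioo (1 - μ) 1,
              (r * u ^ 2 - (1 - r) ^ 2) / ((1 - r) ^ 2 + r * u ^ 2) ^ 2 *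
                (1 - r) ^ (α - 1) * r := by
  refine ⟨1 / 8, by norm_num, fun α μ u hα₀ hα₁ _ hμ hu₀ _ huμ => ?_⟩
  have h1α : 0 < 1 - α := by linarith
  have htwo : (2 : ℝ) ^ α * α ≤ 2 := by
    have := rpow_le_rpow_of_exponent_le (by norm_num : (1 : ℝ) ≤ 2) hα₁.le
    rw [rpow_one] at this
    nlinarith [rpow_pos_of_pos two_pos α]
  calc 1 / 8 * u ^ (α - 2) = u ^ α / (8 * u ^ 2) := by
        rw [rpow_sub hu₀, rpow_two]; ring
    _ ≤ (u / 2) ^ α / (4 * α * u ^ 2) := by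
        rw [div_rpow hu₀.le zero_le_two, div_div, div_le_div_iff₀ (by positivity) (by positivity)]
        nlinarith [mul_le_mul_of_nonneg_left htwo (by positivity : 0 ≤ u ^ α * (4 * u ^ 2))]
    _ = 1 / (1 - α) * ((1 - α) / (4 * u ^ 2) * ((u / 2) ^ α / α)) := by
        field_simp
    _ ≤ _ := by
        gcongr
        exact RadialIntegral.integral_integrand_ge hα₀ hα₁.le hu₀ huμ hμ

end
end
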